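/- For all positive integers n, k and every partition α with at most k parts each at most n, the multiset of arm–leg pairs, computed in SQ, of the cells of V equals the multiset of arm–leg pairs, computed in R, of the cells of R₁; that is, AL_SQ(V) = AL_R(R₁) as multisets of pairs. -/
import Mathlib


/-- The skew diagram with rows `a,…,b`, where row `i` contains the cells
`(i,j)` for `lo i ≤ j ≤ hi i`. -/
def skewD (a b : ℕ) (lo hi : ℕ → ℕ) : Finset (ℕ × ℕ) :=
  (Finset.Icc a b).biUnion fun i => (Finset.Icc (lo i) (hi i)).image fun j => (i, j)

/-- Arm length: number of cells of `G` in the same row, strictly to the right. -/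
def arm (G : Finset (ℕ × ℕ)) (x : ℕ × ℕ) : ℕ :=
  (G.filter fun y => y.1 = x.1 ∧ x.2 < y.2).card

/-- Leg length: number of cells of `G` in the same column, strictly below
(rows are numbered bottom to top). -/
def leg (G : Finset (ℕ × ℕ)) (x : ℕ × ℕ) : ℕ :=
  (G.filter fun y => y.2 = x.2 ∧ y.1 < x.1).card

/-- Multiset of arm–leg pairs of the cells of `E`, computed in `G`. -/
def AL (G E : Finset (ℕ × ℕ)) : Multiset (ℕ × ℕ) :=
  E.val.map fun x => (arm G x, leg G x)

/-- Multiset of hook lengths of `G`. -/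
def hookMS (G : Finset (ℕ × ℕ)) : Multiset ℕ :=
  G.val.map fun x => arm G x + leg G x + 1

/-- The skew diagram `T`. -/
def TT (n k : ℕ) (α : ℕ → ℕ) : Finset (ℕ × ℕ) :=
  skewD 1 k (fun i => α 1 - α i + 1) (fun i => n + α 1 - α i)

/-- The skew diagram `V`. -/
def VV (n k : ℕ) (α : ℕ → ℕ) : Finset (ℕ × ℕ) :=
  skewD (k + 1) (2 * k) (fun i => n + α 1 - α (i - k) + 1) (fun _ => n + α 1)

/-- The skew diagram `SQ = T ∪ V`. -/
def SQ (n k : ℕ) (α : ℕ → ℕ) : Finset (ℕ × ℕ) :=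
  TT n k α ∪ VV n k α

/-- The `k × n` rectangle `R`. -/
def RR (n k : ℕ) : Finset (ℕ × ℕ) :=
  skewD 1 k (fun _ => 1) (fun _ => n)

/-- The Young diagram `D` of `α`. -/
def DD (k : ℕ) (α : ℕ → ℕ) : Finset (ℕ × ℕ) :=
  skewD 1 k (fun _ => 1) (fun i => α (k + 1 - i))

/-- The 180° rotation `T*` of `T`. -/
def Tstar (n k : ℕ) (α : ℕ → ℕ) : Finset (ℕ × ℕ) :=
  skewD 1 k (fun i => α (k + 1 - i) - α k + 1) (fun i => n + α (k + 1 - i) - α k)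

/-- The region `R₁` of the rectangle `R`. -/
def RRone (n k : ℕ) (α : ℕ → ℕ) : Finset (ℕ × ℕ) :=
  skewD 1 k (fun i => n - α (k + 1 - i) + 1) (fun _ => n)

open Finset in
lemma mem_skewD {a b : ℕ} {lo hi : ℕ → ℕ} {x : ℕ × ℕ} :
    x ∈ skewD a b lo hi ↔ a ≤ x.1 ∧ x.1 ≤ b ∧ lo x.1 ≤ x.2 ∧ x.2 ≤ hi x.1 := by
  obtain ⟨i, j⟩ := x
  simp only [skewD, mem_biUnion, mem_image, mem_Icc, Prod.mk.injEq]
  constructor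
  · rintro ⟨r, ⟨h1, h2⟩, c, ⟨h3, h4⟩, rfl, rfl⟩; exact ⟨h1, h2, h3, h4⟩
  · rintro ⟨h1, h2, h3, h4⟩; exact ⟨i, ⟨h1, h2⟩, j, ⟨h3, h4⟩, rfl, rfl⟩

open Finset in
lemma arm_skewD {a b : ℕ} {lo hi : ℕ → ℕ} {i j : ℕ}
    (hi1 : a ≤ i) (hi2 : i ≤ b) (hj : lo i ≤ j) :
    arm (skewD a b lo hi) (i, j) = hi i - j := by
  rw [arm]
  have h : ((skewD a b lo hi).filter fun y => y.1 = (i, j).1 ∧ (i, j).2 < y.2)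
      = (Finset.Icc (j + 1) (hi i)).image fun c => (i, c) := by
    ext ⟨r, c⟩
    simp only [mem_filter, mem_skewD, mem_image, mem_Icc, Prod.mk.injEq]
    constructor
    · rintro ⟨⟨h1, h2, h3, h4⟩, rfl, h5⟩; exact ⟨c, ⟨by omega, h4⟩, rfl, rfl⟩
    · rintro ⟨c', ⟨h5, h6⟩, rfl, rfl⟩; exact ⟨⟨hi1, hi2, by omega, h6⟩, rfl, by omega⟩
  rw [h, Finset.card_image_of_injective _ (fun x y h => by simpa using h), Nat.card_Icc]
  omega

open Finset in
lemma leg_skewD {a b : ℕ} {lo hi : ℕ → ℕ} {i j : ℕ} :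
    leg (skewD a b lo hi) (i, j)
      = ((Finset.Icc a b).filter fun r => r < i ∧ lo r ≤ j ∧ j ≤ hi r).card := by
  rw [leg]
  have h : ((skewD a b lo hi).filter fun y => y.2 = (i, j).2 ∧ y.1 < (i, j).1)
      = (((Finset.Icc a b).filter fun r => r < i ∧ lo r ≤ j ∧ j ≤ hi r).image fun r => (r, j)) := by
    ext ⟨r, c⟩
    simp only [mem_filter, mem_skewD, mem_image, mem_Icc, Prod.mk.injEq]
    constructor
    · rintro ⟨⟨h1, h2, h3, h4⟩, rfl, h5⟩; exact ⟨r, ⟨⟨h1, h2⟩, h5, h3, h4⟩, rfl, rfl⟩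
    · rintro ⟨r', ⟨⟨h1, h2⟩, h5, h3, h4⟩, rfl, rfl⟩; exact ⟨⟨h1, h2, h3, h4⟩, rfl, h5⟩
  rw [h, Finset.card_image_of_injective _ (fun x y h => by simpa using h)]

lemma leg_union_of_disjoint {A B : Finset (ℕ × ℕ)} (h : Disjoint A B) (x : ℕ × ℕ) :
    leg (A ∪ B) x = leg A x + leg B x := by
  unfold leg
  rw [Finset.filter_union, Finset.card_union_of_disjoint (Finset.disjoint_filter_filter h)]

lemma tseg (k : ℕ) (α : ℕ → ℕ) (hmono : ∀ i j, 1 ≤ i → i ≤ j → j ≤ k → α j ≤ α i)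
    (c m : ℕ) (hm1 : 1 ≤ m) (hmk : m ≤ k) :
    (c < α m ↔ m ≤ ((Finset.Icc 1 k).filter fun r => c < α r).card) := by
  constructor
  · intro h
    have hsub : Finset.Icc 1 m ⊆ (Finset.Icc 1 k).filter fun r => c < α r := by
      intro r hr
      simp only [Finset.mem_Icc] at hr
      simp only [Finset.mem_filter, Finset.mem_Icc]
      exact ⟨⟨hr.1, le_trans hr.2 hmk⟩, lt_of_lt_of_le h (hmono r m hr.1 hr.2 hmk)⟩
    have := Finset.card_le_card hsub
    simpa [Nat.card_Icc] using this
  · intro h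
    by_contra hc
    push_neg at hc
    have hsub : ((Finset.Icc 1 k).filter fun r => c < α r) ⊆ Finset.Icc 1 (m - 1) := by
      intro r hr
      simp only [Finset.mem_filter, Finset.mem_Icc] at hr
      simp only [Finset.mem_Icc]
      refine ⟨hr.1.1, ?_⟩
      by_contra hrm
      push_neg at hrm
      have : α r ≤ α m := hmono m r hm1 (by omega) hr.1.2
      omega
    have := Finset.card_le_card hsub
    simp only [Nat.card_Icc] at this
    omega

/-- `AL_{SQ}(V) = AL_R(R₁)`. -/
theorem AL_SQ_V_eq_AL_R_Rone (n k : ℕ) (α : ℕ → ℕ) (hn : 0 < n) (hk : 0 < k)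
    (hα1 : α 1 ≤ n) (hmono : ∀ i j, 1 ≤ i → i ≤ j → j ≤ k → α j ≤ α i) :
    AL (SQ n k α) (VV n k α) = AL (RR n k) (RRone n k α) := by
  classical
  have hαle : ∀ m, 1 ≤ m → m ≤ k → α m ≤ n := fun m h1 h2 =>
    le_trans (hmono 1 m le_rfl h1 h2) hα1
  set T : ℕ → ℕ := fun c => ((Finset.Icc 1 k).filter fun r => c < α r).card with hT
  have hTk : ∀ c, T c ≤ k := by
    intro c
    have := Finset.card_le_card (Finset.filter_subset (fun r => c < α r) (Finset.Icc 1 k))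
    simpa [hT, Nat.card_Icc] using this
  have hseg : ∀ c m, 1 ≤ m → m ≤ k → (c < α m ↔ m ≤ T c) :=
    fun c m h1 h2 => tseg k α hmono c m h1 h2
  set f : ℕ × ℕ → ℕ × ℕ := fun x => (x.1 - T (n + α 1 - x.2), x.2 - α 1) with hf
  -- basic facts about cells of V
  have hVfacts : ∀ i j, (i, j) ∈ VV n k α →
      k + 1 ≤ i ∧ i ≤ 2 * k ∧ n + α 1 - α (i - k) + 1 ≤ j ∧ j ≤ n + α 1 ∧
      i - k ≤ T (n + α 1 - j) ∧ α 1 + 1 ≤ j := by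
    intro i j hij
    rw [VV] at hij
    obtain ⟨h1, h2, h3, h4⟩ :
        k + 1 ≤ i ∧ i ≤ 2 * k ∧ n + α 1 - α (i - k) + 1 ≤ j ∧ j ≤ n + α 1 :=
      mem_skewD.mp hij
    have hik : α (i - k) ≤ n := hαle (i - k) (by omega) (by omega)
    have hc : n + α 1 - j < α (i - k) := by omega
    have := (hseg (n + α 1 - j) (i - k) (by omega) (by omega)).mp hc
    exact ⟨h1, h2, h3, h4, this, by omega⟩
  -- pointwise arm/leg computation
  have key : ∀ x ∈ VV n k α,
      (arm (SQ n k α) x, leg (SQ n k α) x) = (arm (RR n k) (f x), leg (RR n k) (f x)) := by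
    intro x hx
    obtain ⟨i, j⟩ := x
    obtain ⟨h1, h2, h3, h4, h5, h6⟩ := hVfacts i j hx
    have htk : T (n + α 1 - j) ≤ k := hTk (n + α 1 - j)
    -- disjointness of TT and VV
    have hdisj : Disjoint (TT n k α) (VV n k α) := by
      rw [Finset.disjoint_left]
      intro y hy hy'
      obtain ⟨y1, y2⟩ := y
      rw [TT] at hy
      rw [VV] at hy'
      obtain ⟨a1, a2, -, -⟩ :
          1 ≤ y1 ∧ y1 ≤ k ∧ α 1 - α y1 + 1 ≤ y2 ∧ y2 ≤ n + α 1 - α y1 := mem_skewD.mp hy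
      obtain ⟨b1, -, -, -⟩ :
          k + 1 ≤ y1 ∧ y1 ≤ 2 * k ∧ n + α 1 - α (y1 - k) + 1 ≤ y2 ∧ y2 ≤ n + α 1 :=
        mem_skewD.mp hy'
      omega
    -- arm in SQ
    have harm : arm (SQ n k α) (i, j) = n + α 1 - j := by
      rw [SQ, arm, Finset.filter_union]
      have hTe : ((TT n k α).filter fun y => y.1 = (i, j).1 ∧ (i, j).2 < y.2) = ∅ := by
        rw [Finset.filter_eq_empty_iff]
        intro y hy
        obtain ⟨y1, y2⟩ := y
        rw [TT] at hy
        obtain ⟨a1, a2, -, -⟩ :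
            1 ≤ y1 ∧ y1 ≤ k ∧ α 1 - α y1 + 1 ≤ y2 ∧ y2 ≤ n + α 1 - α y1 := mem_skewD.mp hy
        simp only [not_and]
        intro hy1
        exfalso
        omega
      rw [hTe, Finset.empty_union, ← arm, VV]
      exact arm_skewD h1 h2 h3
    -- leg in TT
    have hlegT : leg (TT n k α) (i, j) = k - T (n + α 1 - j) := by
      have h0 : leg (TT n k α) (i, j)
          = ((Finset.Icc 1 k).filter fun r => r < i ∧ α 1 - α r + 1 ≤ j ∧ j ≤ n + α 1 - α r).card := by
        rw [TT]; exact leg_skewD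
      have he : ((Finset.Icc 1 k).filter fun r => r < i ∧ α 1 - α r + 1 ≤ j ∧ j ≤ n + α 1 - α r)
          = (Finset.Icc 1 k).filter fun r => ¬ (n + α 1 - j < α r) := by
        apply Finset.filter_congr
        intro r hr
        simp only [Finset.mem_Icc] at hr
        have har : α r ≤ n := hαle r hr.1 hr.2
        constructor
        · rintro ⟨-, -, hb⟩; omega
        · intro hb; push_neg at hb; exact ⟨by omega, by omega, by omega⟩
      have hsplit := Finset.card_filter_add_card_filter_not
        (s := Finset.Icc 1 k) (p := fun r => n + α 1 - j < α r)
      simp only [Nat.card_Icc] at hsplit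
      have htc : T (n + α 1 - j)
          = ((Finset.Icc 1 k).filter fun r => n + α 1 - j < α r).card := rfl
      rw [h0, he]
      omega
    -- leg in VV
    have hlegV : leg (VV n k α) (i, j) = i - 1 - k := by
      have h0 : leg (VV n k α) (i, j)
          = ((Finset.Icc (k + 1) (2 * k)).filter
              fun r => r < i ∧ n + α 1 - α (r - k) + 1 ≤ j ∧ j ≤ n + α 1).card := by
        rw [VV]; exact leg_skewD
      have he : ((Finset.Icc (k + 1) (2 * k)).filter
            fun r => r < i ∧ n + α 1 - α (r - k) + 1 ≤ j ∧ j ≤ n + α 1)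
          = Finset.Icc (k + 1) (i - 1) := by
        ext r
        simp only [Finset.mem_filter, Finset.mem_Icc]
        constructor
        · rintro ⟨⟨ha, hb⟩, hr, -, -⟩; omega
        · rintro ⟨ha, hb⟩
          have hmm : α (i - k) ≤ α (r - k) := hmono (r - k) (i - k) (by omega) (by omega) (by omega)
          exact ⟨⟨ha, by omega⟩, by omega, by omega, by omega⟩
      rw [h0, he, Nat.card_Icc]
      omega
    -- arm and leg in RR for the image
    have hit1 : 1 ≤ i - T (n + α 1 - j) := by omega
    have hit2 : i - T (n + α 1 - j) ≤ k := by omega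
    have hja : 1 ≤ j - α 1 := by omega
    have harmR : arm (RR n k) (i - T (n + α 1 - j), j - α 1) = n - (j - α 1) := by
      rw [RR]; exact arm_skewD hit1 hit2 hja
    have hlegR : leg (RR n k) (i - T (n + α 1 - j), j - α 1) = i - T (n + α 1 - j) - 1 := by
      have h0 : leg (RR n k) (i - T (n + α 1 - j), j - α 1)
          = ((Finset.Icc 1 k).filter
              fun r => r < i - T (n + α 1 - j) ∧ 1 ≤ j - α 1 ∧ j - α 1 ≤ n).card := by
        rw [RR]; exact leg_skewD
      have he : ((Finset.Icc 1 k).filter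
            fun r => r < i - T (n + α 1 - j) ∧ 1 ≤ j - α 1 ∧ j - α 1 ≤ n)
          = Finset.Icc 1 (i - T (n + α 1 - j) - 1) := by
        ext r
        simp only [Finset.mem_filter, Finset.mem_Icc]
        constructor
        · rintro ⟨⟨ha, hb⟩, hr, -, -⟩; omega
        · rintro ⟨ha, hb⟩
          have hik : α (i - k) ≤ n := hαle (i - k) (by omega) (by omega)
          exact ⟨⟨ha, by omega⟩, by omega, by omega, by omega⟩
      rw [h0, he, Nat.card_Icc]
      omega
    show (arm (SQ n k α) (i, j), leg (SQ n k α) (i, j))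
        = (arm (RR n k) (i - T (n + α 1 - j), j - α 1),
           leg (RR n k) (i - T (n + α 1 - j), j - α 1))
    rw [harm, harmR, hlegR, SQ, leg_union_of_disjoint hdisj, hlegT, hlegV, Prod.mk.injEq]
    exact ⟨by omega, by omega⟩
  -- f maps VV onto RRone
  have himg : (VV n k α).image f = RRone n k α := by
    ext ⟨i', j'⟩
    simp only [Finset.mem_image]
    constructor
    · rintro ⟨⟨i, j⟩, hx, hfx⟩
      obtain ⟨h1, h2, h3, h4, h5, h6⟩ := hVfacts i j hx
      have htk : T (n + α 1 - j) ≤ k := hTk (n + α 1 - j)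
      have h2' : (i - T (n + α 1 - j), j - α 1) = (i', j') := hfx
      rw [Prod.mk.injEq] at h2'
      obtain ⟨e1, e2⟩ := h2'
      subst e1; subst e2
      rw [RRone]
      refine mem_skewD.mpr ?_
      show 1 ≤ i - T (n + α 1 - j) ∧ i - T (n + α 1 - j) ≤ k ∧
        n - α (k + 1 - (i - T (n + α 1 - j))) + 1 ≤ j - α 1 ∧ j - α 1 ≤ n
      have hm1 : 1 ≤ k + 1 - (i - T (n + α 1 - j)) := by omega
      have hm : k + 1 - (i - T (n + α 1 - j)) ≤ T (n + α 1 - j) := by omega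
      have hgt := (hseg (n + α 1 - j) (k + 1 - (i - T (n + α 1 - j))) hm1 (by omega)).mpr hm
      have hle : α (k + 1 - (i - T (n + α 1 - j))) ≤ n := hαle _ hm1 (by omega)
      refine ⟨by omega, by omega, by omega, by omega⟩
    · rintro hmem
      rw [RRone] at hmem
      obtain ⟨h1, h2, h3, h4⟩ :
          1 ≤ i' ∧ i' ≤ k ∧ n - α (k + 1 - i') + 1 ≤ j' ∧ j' ≤ n := mem_skewD.mp hmem
      have htk : T (n - j') ≤ k := hTk (n - j')
      have hαi : α (k + 1 - i') ≤ n := hαle _ (by omega) (by omega)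
      have hgt : n - j' < α (k + 1 - i') := by omega
      have hle : k + 1 - i' ≤ T (n - j') := (hseg (n - j') (k + 1 - i') (by omega) (by omega)).mp hgt
      refine ⟨(i' + T (n - j'), j' + α 1), ?_, ?_⟩
      · rw [VV]
        refine mem_skewD.mpr ?_
        show k + 1 ≤ i' + T (n - j') ∧ i' + T (n - j') ≤ 2 * k ∧
          n + α 1 - α (i' + T (n - j') - k) + 1 ≤ j' + α 1 ∧ j' + α 1 ≤ n + α 1
        have hm1 : 1 ≤ i' + T (n - j') - k := by omega
        have hm2 : i' + T (n - j') - k ≤ T (n - j') := by omega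
        have hgt2 : n - j' < α (i' + T (n - j') - k) :=
          (hseg (n - j') _ hm1 (by omega)).mpr hm2
        have hαi2 : α (i' + T (n - j') - k) ≤ n := hαle _ hm1 (by omega)
        exact ⟨by omega, by omega, by omega, by omega⟩
      · show (i' + T (n - j') - T (n + α 1 - (j' + α 1)), j' + α 1 - α 1) = (i', j')
        have hcc : n + α 1 - (j' + α 1) = n - j' := by omega
        rw [hcc, Prod.mk.injEq]
        exact ⟨by omega, by omega⟩
  -- f is injective on VV
  have hinj : Set.InjOn f (VV n k α) := by
    intro x hx y hy hxy
    obtain ⟨i, j⟩ := x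
    obtain ⟨i2, j2⟩ := y
    obtain ⟨h1, h2, h3, h4, h5, h6⟩ := hVfacts i j hx
    obtain ⟨g1, g2, g3, g4, g5, g6⟩ := hVfacts i2 j2 hy
    have h2' : (i - T (n + α 1 - j), j - α 1) = (i2 - T (n + α 1 - j2), j2 - α 1) := hxy
    rw [Prod.mk.injEq] at h2'
    obtain ⟨e1, e2⟩ := h2'
    have hj : j = j2 := by omega
    subst hj
    have := hTk (n + α 1 - j)
    have hi : i = i2 := by omega
    rw [hi]
  -- assemble
  rw [AL, AL, ← himg, Finset.image_val_of_injOn hinj, Multiset.map_map]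
  apply Multiset.map_congr rfl
  intro x hx
  exact key x (Finset.mem_val.mp hx)
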